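/- For bounded linear operators X, Y on a complex Hilbert space H and t ∈ [0,1], the weighted numerical radius of the off-diagonal operator matrix [[0, X], [Y, 0]] equals sup over θ ∈ ℝ of (1/2)·‖(1-2t)(e^{-iθ}X + e^{iθ}Y*) + (e^{iθ}X + e^{-iθ}Y*)‖. -/

import Mathlib

open ContinuousLinearMap in
noncomputable def nr {H : Type*} [NormedAddCommGroup H] [InnerProductSpace ℂ H]
    (T : H →L[ℂ] H) : ℝ :=
  ⨆ x : {x : H // ‖x‖ = 1}, ‖(inner ℂ (T x) (x : H) : ℂ)‖

open ContinuousLinearMap in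
noncomputable def wnr {H : Type*} [NormedAddCommGroup H] [InnerProductSpace ℂ H]
    [CompleteSpace H] (t : ℝ) (T : H →L[ℂ] H) : ℝ :=
  nr ((1 - 2*t) • adjoint T + T)

/-- The 2×2 block operator matrix [[A, B], [C, D]] acting on the Hilbert space H ⊕ H. -/
noncomputable def blk {H : Type*} [NormedAddCommGroup H] [InnerProductSpace ℂ H]
    (A B C D : H →L[ℂ] H) : WithLp 2 (H × H) →L[ℂ] WithLp 2 (H × H) :=
  (((WithLp.prodContinuousLinearEquiv 2 ℂ H H).symm :
      (H × H) →L[ℂ] WithLp 2 (H × H)).comp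
    (((A.coprod B).prod (C.coprod D)).comp
      ((WithLp.prodContinuousLinearEquiv 2 ℂ H H : WithLp 2 (H × H) ≃L[ℂ] (H × H)) :
        WithLp 2 (H × H) →L[ℂ] (H × H))))

open ContinuousLinearMap

/-!
With `Re S = (S + S†) / 2`, the numerical radius satisfies `w(T) = sup_θ ‖Re (e^{iθ} T)‖`:
every `|⟪T x, x⟫|` equals `⟪Re (e^{iθ} T) x, x⟫` for a suitable `θ`, and conversely
`Re (e^{iθ} T)` is self-adjoint, so its norm is its numerical radius, which is at most `w(T)`.
The weighted numerical radius of `[[0, X], [Y, 0]]` is the numerical radius of `[[0, A], [B, 0]]`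
with `A = (1 - 2t) Y† + X` and `B = (1 - 2t) X† + Y`, and `2 Re (e^{iθ} [[0, A], [B, 0]])` is the
off-diagonal matrix with entries `C = e^{iθ} A + e^{-iθ} B†` and `C†`, whose norm is `‖C‖`.
-/

section NumericalRadius

variable {E : Type*} [NormedAddCommGroup E] [InnerProductSpace ℂ E]

local notation "⟪" x ", " y "⟫" => inner ℂ x y

lemma norm_inner_apply_self_le_opNorm (T : E →L[ℂ] E) (x : E) :
    ‖⟪T x, x⟫‖ ≤ ‖T‖ * ‖x‖ ^ 2 :=
  calc ‖⟪T x, x⟫‖ ≤ ‖T x‖ * ‖x‖ := norm_inner_le_norm _ _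
    _ ≤ ‖T‖ * ‖x‖ * ‖x‖ := by gcongr; exact T.le_opNorm x
    _ = ‖T‖ * ‖x‖ ^ 2 := by ring

lemma nr_nonneg (T : E →L[ℂ] E) : 0 ≤ nr T :=
  Real.iSup_nonneg fun _ => norm_nonneg _

lemma nr_le {T : E →L[ℂ] E} {c : ℝ} (hc : 0 ≤ c) (h : ∀ x : E, ‖x‖ = 1 → ‖⟪T x, x⟫‖ ≤ c) :
    nr T ≤ c :=
  Real.iSup_le (fun x => h x x.2) hc

lemma norm_inner_le_nr (T : E →L[ℂ] E) {x : E} (hx : ‖x‖ = 1) : ‖⟪T x, x⟫‖ ≤ nr T := by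
  refine le_ciSup (f := fun x : {x : E // ‖x‖ = 1} => ‖⟪T x, (x : E)⟫‖) ⟨‖T‖, ?_⟩ ⟨x, hx⟩
  rintro _ ⟨y, rfl⟩
  simpa [y.2] using norm_inner_apply_self_le_opNorm T y

lemma norm_inner_le_nr_mul_sq (T : E →L[ℂ] E) (x : E) : ‖⟪T x, x⟫‖ ≤ nr T * ‖x‖ ^ 2 := by
  rcases eq_or_ne x 0 with rfl | hx
  · simp
  have hx' : 0 < ‖x‖ := norm_pos_iff.2 hx
  have h := norm_inner_le_nr T (x := ((‖x‖⁻¹ : ℝ) : ℂ) • x) (by simp [norm_smul, hx'.ne'])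
  rw [map_smul, inner_smul_left, inner_smul_right, norm_mul, norm_mul, RCLike.norm_conj,
    Complex.norm_real, norm_inv, norm_norm, ← mul_assoc, ← sq, inv_pow, ← div_eq_inv_mul,
    div_le_iff₀ (by positivity)] at h
  exact h

lemma opNorm_le_nr_of_isSymmetric {T : E →L[ℂ] E} (hT : (T : E →ₗ[ℂ] E).IsSymmetric) :
    ‖T‖ ≤ nr T := by
  rw [T.norm_eq_iSup_rayleighQuotient hT]
  refine ciSup_le fun x => ?_
  rcases eq_or_ne x 0 with rfl | hx
  · simpa using nr_nonneg T
  rw [rayleighQuotient, reApplyInnerSelf_apply, abs_div, abs_sq,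
    div_le_iff₀ (by positivity)]
  exact (RCLike.abs_re_le_norm _).trans (norm_inner_le_nr_mul_sq T x)

end NumericalRadius

section Rotation

variable {E : Type*} [NormedAddCommGroup E] [InnerProductSpace ℂ E] [CompleteSpace E]

local notation "⟪" x ", " y "⟫" => inner ℂ x y

lemma adjoint_smul_add_star_smul_adjoint (u : ℂ) (A B : E →L[ℂ] E) :
    adjoint (u • A + star u • adjoint B) = u • B + star u • adjoint A := by
  rw [← star_eq_adjoint, star_add, star_smul, star_smul, star_star, star_eq_adjoint,
    star_eq_adjoint, adjoint_adjoint, add_comm]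

lemma isSelfAdjoint_smul_add_star_smul_adjoint (u : ℂ) (T : E →L[ℂ] E) :
    IsSelfAdjoint (u • T + star u • adjoint T) :=
  isSelfAdjoint_iff'.2 (adjoint_smul_add_star_smul_adjoint u T T)

lemma inner_smul_add_star_smul_adjoint_apply (u : ℂ) (T : E →L[ℂ] E) (x : E) :
    ⟪(u • T + star u • adjoint T) x, x⟫ = 2 * (star u * ⟪T x, x⟫).re := by
  rw [add_apply, smul_apply, smul_apply, inner_add_left, inner_smul_left, inner_smul_left,
    adjoint_inner_left, ← inner_conj_symm x, ← map_mul, Complex.star_def]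
  exact_mod_cast Complex.add_conj _

lemma star_exp_ofReal_mul_I (θ : ℝ) :
    star (Complex.exp (θ * Complex.I)) = Complex.exp (-θ * Complex.I) := by
  rw [Complex.star_def, ← Complex.exp_conj]
  simp

theorem nr_eq_iSup_norm_exp_smul_add_adjoint (T : E →L[ℂ] E) :
    nr T = ⨆ θ : ℝ, (1/2) * ‖Complex.exp (θ * Complex.I) • T
      + Complex.exp (-θ * Complex.I) • adjoint T‖ := by
  set S : ℝ → E →L[ℂ] E := fun θ => Complex.exp (θ * Complex.I) • T
      + Complex.exp (-θ * Complex.I) • adjoint T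
  have hS : ∀ θ : ℝ, S θ = Complex.exp (θ * Complex.I) • T
      + star (Complex.exp (θ * Complex.I)) • adjoint T := fun θ => by
    rw [star_exp_ofReal_mul_I]
  have hle : ∀ θ, (1/2) * ‖S θ‖ ≤ nr T := fun θ => by
    have hnorm := opNorm_le_nr_of_isSymmetric
      (hS θ ▸ isSelfAdjoint_smul_add_star_smul_adjoint _ T).isSymmetric
    have hnr : nr (S θ) ≤ 2 * nr T := nr_le (by linarith [nr_nonneg T]) fun x hx => by
      rw [hS, inner_smul_add_star_smul_adjoint_apply, norm_mul, Complex.norm_real,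
        Complex.norm_two, Real.norm_eq_abs]
      calc 2 * |(star (Complex.exp (θ * Complex.I)) * ⟪T x, x⟫).re|
          ≤ 2 * ‖star (Complex.exp (θ * Complex.I)) * ⟪T x, x⟫‖ := by
            gcongr; exact Complex.abs_re_le_norm _
        _ ≤ 2 * nr T := by
            rw [norm_mul, norm_star, Complex.norm_exp_ofReal_mul_I, one_mul]
            gcongr; exact norm_inner_le_nr T hx
    linarith
  apply le_antisymm
  · refine nr_le (Real.iSup_nonneg fun θ => by positivity) fun x hx => ?_
    set c := ⟪T x, x⟫
    have hc : star (Complex.exp (c.arg * Complex.I)) * c = ‖c‖ := by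
      conv_lhs => rw [← Complex.norm_mul_exp_arg_mul_I c]
      rw [star_exp_ofReal_mul_I, mul_left_comm, ← Complex.exp_add]
      simp
    have hinner : ‖⟪S c.arg x, x⟫‖ = 2 * ‖c‖ := by
      rw [hS, inner_smul_add_star_smul_adjoint_apply, hc]
      simp
    calc ‖c‖ = (1/2) * ‖⟪S c.arg x, x⟫‖ := by rw [hinner]; ring
      _ ≤ (1/2) * ‖S c.arg‖ := by
          gcongr; simpa [hx] using norm_inner_apply_self_le_opNorm (S c.arg) x
      _ ≤ ⨆ θ, (1/2) * ‖S θ‖ := le_ciSup ⟨nr T, by rintro _ ⟨θ, rfl⟩; exact hle θ⟩ c.arg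
  · exact Real.iSup_le hle (nr_nonneg T)

end Rotation

section BlockMatrix

variable {H : Type*} [NormedAddCommGroup H] [InnerProductSpace ℂ H]

@[simp]
lemma blk_fst (A B C D : H →L[ℂ] H) (x : WithLp 2 (H × H)) :
    (blk A B C D x).fst = A x.fst + B x.snd := rfl

@[simp]
lemma blk_snd (A B C D : H →L[ℂ] H) (x : WithLp 2 (H × H)) :
    (blk A B C D x).snd = C x.fst + D x.snd := rfl

lemma ext_withLp_prod {S T : WithLp 2 (H × H) →L[ℂ] WithLp 2 (H × H)}
    (h₁ : ∀ x, (S x).fst = (T x).fst) (h₂ : ∀ x, (S x).snd = (T x).snd) : S = T :=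
  ext fun x => (WithLp.ext_iff 2).2 (Prod.ext (h₁ x) (h₂ x))

lemma blk_add (A B C D A' B' C' D' : H →L[ℂ] H) :
    blk A B C D + blk A' B' C' D' = blk (A + A') (B + B') (C + C') (D + D') :=
  ext_withLp_prod (fun x => by simp; abel) (fun x => by simp; abel)

lemma smul_blk (c : ℂ) (A B C D : H →L[ℂ] H) :
    c • blk A B C D = blk (c • A) (c • B) (c • C) (c • D) :=
  ext_withLp_prod (fun x => by simp) (fun x => by simp)

lemma norm_blk_zero_zero (B C : H →L[ℂ] H) : ‖blk 0 B C 0‖ = max ‖B‖ ‖C‖ := by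
  apply le_antisymm
  · refine opNorm_le_bound _ (by positivity) fun x => ?_
    rw [← sq_le_sq₀ (norm_nonneg _) (by positivity), mul_pow, WithLp.prod_norm_sq_eq_of_L2,
      WithLp.prod_norm_sq_eq_of_L2]
    have hB : ‖B x.snd‖ ≤ max ‖B‖ ‖C‖ * ‖x.snd‖ :=
      (B.le_opNorm _).trans (by gcongr; exact le_max_left _ _)
    have hC : ‖C x.fst‖ ≤ max ‖B‖ ‖C‖ * ‖x.fst‖ :=
      (C.le_opNorm _).trans (by gcongr; exact le_max_right _ _)
    simp only [blk_fst, blk_snd, zero_apply, zero_add, add_zero]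
    nlinarith [pow_le_pow_left₀ (norm_nonneg _) hB 2, pow_le_pow_left₀ (norm_nonneg _) hC 2]
  · refine max_le (opNorm_le_bound _ (norm_nonneg (blk 0 B C 0)) fun v => ?_)
      (opNorm_le_bound _ (norm_nonneg (blk 0 B C 0)) fun v => ?_)
    · simpa [WithLp.prod_norm_eq_of_L2] using (blk 0 B C 0).le_opNorm (WithLp.toLp 2 (0, v))
    · simpa [WithLp.prod_norm_eq_of_L2] using (blk 0 B C 0).le_opNorm (WithLp.toLp 2 (v, 0))

variable [CompleteSpace H]

lemma adjoint_blk (A B C D : H →L[ℂ] H) :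
    adjoint (blk A B C D) = blk (adjoint A) (adjoint C) (adjoint B) (adjoint D) := by
  refine ((eq_adjoint_iff _ _).2 fun x y => ?_).symm
  simp only [WithLp.prod_inner_apply, WithLp.ofLp_fst, WithLp.ofLp_snd, blk_fst, blk_snd,
    inner_add_left, inner_add_right, adjoint_inner_left]
  ring

theorem nr_blk_zero_zero (A B : H →L[ℂ] H) :
    nr (blk 0 A B 0) = ⨆ θ : ℝ, (1/2) * ‖Complex.exp (θ * Complex.I) • A
      + Complex.exp (-θ * Complex.I) • adjoint B‖ := by
  rw [nr_eq_iSup_norm_exp_smul_add_adjoint]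
  refine iSup_congr fun θ => ?_
  rw [← star_exp_ofReal_mul_I, adjoint_blk, smul_blk, smul_blk, blk_add]
  simp only [map_zero, smul_zero, add_zero, ← adjoint_smul_add_star_smul_adjoint _ A B]
  rw [norm_blk_zero_zero, LinearIsometryEquiv.norm_map, max_self]

end BlockMatrix

variable {H : Type*} [NormedAddCommGroup H] [InnerProductSpace ℂ H] [CompleteSpace H]

theorem stmt8_general (t : ℝ) (X Y : H →L[ℂ] H) :
    wnr t (blk 0 X Y 0) =
      ⨆ θ : ℝ, (1/2) *
        ‖(1 - 2*t) • (Complex.exp (-(θ:ℂ) * Complex.I) • X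
            + Complex.exp ((θ:ℂ) * Complex.I) • adjoint Y)
          + (Complex.exp ((θ:ℂ) * Complex.I) • X
            + Complex.exp (-(θ:ℂ) * Complex.I) • adjoint Y)‖ := by
  simp only [wnr, ← Complex.coe_smul]
  rw [adjoint_blk, smul_blk, blk_add]
  simp only [map_zero, smul_zero, zero_add, nr_blk_zero_zero]
  refine iSup_congr fun θ => ?_
  rw [map_add, map_smulₛₗ, adjoint_adjoint, Complex.conj_ofReal]
  congr 2
  module

theorem stmt8 (t : ℝ) (ht : t ∈ Set.Icc (0:ℝ) 1) (X Y : H →L[ℂ] H) :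
    wnr t (blk 0 X Y 0) =
      ⨆ θ : ℝ, (1/2) *
        ‖(1 - 2*t) • (Complex.exp (-(θ:ℂ) * Complex.I) • X
            + Complex.exp ((θ:ℂ) * Complex.I) • adjoint Y)
          + (Complex.exp ((θ:ℂ) * Complex.I) • X
            + Complex.exp (-(θ:ℂ) * Complex.I) • adjoint Y)‖ :=
  stmt8_general t X Y
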